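/- Let (Ω, F, P) be a probability space with filtration (F_k)_{k∈ℕ}. Let h : ℝⁿ → ℝ be a concave function, let μ* ∈ ℝⁿ with μ* ≥ 0 componentwise be a maximizer of h (h(μ) ≤ h(μ*) for all μ ∈ ℝⁿ), let G > 0, and let (ε_k) be nonnegative reals with ∑_{k=1}^∞ ε_k² < ∞ and ∑_{k=1}^∞ ε_k = ∞. Let (μ(k)) be a process adapted to (F_k) with values in the nonnegative orthant ℝⁿ₊ with E[‖μ(1) − μ*‖²] < ∞ and E[|h(μ(k))|] < ∞ for all k, and let g(k+1) be F_{k+1}-measurable ℝⁿ-valued random vectors such that, almost surely, E[‖g(k+1)‖² | F_k] ≤ G² and E[g(k+1) | F_k] is a supergradient of h at μ(k). Suppose μ(k+1) = proj₊( μ(k) + ε_k · g(k+1) ) for all k, each μ(k) is integrable, and the sequence of means μ̃(k) := E[μ(k)] (componentwise expectation) converges to some μ̃(∞) ∈ ℝⁿ. Then h(μ̃(∞)) = h(μ*); that is, the limit of the expected dual iterates attains the maximum of the dual function. -/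

import Mathlib

/-!
Since `μ* ≥ 0` and the projection onto the orthant is nonexpansive,
`‖μ(k+1) − μ*‖² ≤ ‖μ(k) − μ*‖² + 2 ε_k ⟪μ(k) − μ*, g(k+1)⟫ + ε_k² ‖g(k+1)‖²`.
Conditioning the middle term on `F_k` and using the supergradient inequality at `μ*` gives, for
`A(k) = E ‖μ(k) − μ*‖²` and the gap `D(k) = h(μ*) − E h(μ(k)) ≥ 0`, the descent inequality
`A(k+1) ≤ A(k) + G² ε_k² − 2 ε_k D(k)`. Summing it shows `∑ ε_k D(k) < ∞`, so `∑ ε_k = ∞` forces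
`D(k)` to be arbitrarily small infinitely often. By Jensen, `h(E μ(k)) ≥ E h(μ(k)) = h(μ*) − D(k)`,
and continuity of the concave `h` along `E μ(k) → μ̃(∞)` yields `h(μ̃(∞)) ≥ h(μ*)`.
-/

open MeasureTheory Filter RealInnerProductSpace

/-- Componentwise projection onto the nonnegative orthant of `ℝⁿ`. -/
noncomputable def projPos {n : ℕ} (x : EuclideanSpace ℝ (Fin n)) : EuclideanSpace ℝ (Fin n) :=
  WithLp.toLp 2 (fun j => max (x j) 0)

open scoped Topology

lemma norm_projPos_sub_le {n : ℕ} (x : EuclideanSpace ℝ (Fin n)) {y : EuclideanSpace ℝ (Fin n)}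
    (hy : ∀ j, 0 ≤ y j) : ‖projPos x - y‖ ≤ ‖x - y‖ := by
  rw [EuclideanSpace.norm_eq, EuclideanSpace.norm_eq]
  gcongr with j
  have hj : projPos x j - y j = max (x j) 0 - max (y j) 0 := by rw [max_eq_left (hy j)]; rfl
  simpa only [PiLp.sub_apply, Real.norm_eq_abs, hj] using abs_max_sub_max_le_abs (x j) (y j) 0

section Deterministic

variable {A D t : ℕ → ℝ}

lemma summable_mul_of_le_sub_mul {C : ℝ} (hA : ∀ k, 0 ≤ A k) (hD : ∀ k, 0 ≤ D k)
    (ht : ∀ k, 0 ≤ t k) (hC : 0 ≤ C) (ht_sq : Summable fun k => t k ^ 2)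
    (hstep : ∀ k, A (k + 1) ≤ A k + C * t k ^ 2 - 2 * t k * D k) :
    Summable fun k => t k * D k := by
  have htelescope : ∀ K, A K + 2 * ∑ k ∈ Finset.range K, t k * D k
      ≤ A 0 + C * ∑ k ∈ Finset.range K, t k ^ 2 := by
    intro K
    induction K with
    | zero => simp
    | succ K ih =>
      rw [Finset.sum_range_succ, Finset.sum_range_succ]
      linarith [hstep K]
  refine summable_of_sum_range_le (c := (A 0 + C * ∑' k, t k ^ 2) / 2)
    (fun k => mul_nonneg (ht k) (hD k)) fun K => ?_
  have hpartial : C * ∑ k ∈ Finset.range K, t k ^ 2 ≤ C * ∑' k, t k ^ 2 :=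
    mul_le_mul_of_nonneg_left (ht_sq.sum_le_tsum _ fun k _ => sq_nonneg (t k)) hC
  linarith [htelescope K, hA K]

lemma frequently_lt_of_summable_mul (ht : ∀ k, 0 ≤ t k) (ht_div : ¬ Summable t)
    (htD : Summable fun k => t k * D k) {δ : ℝ} (hδ : 0 < δ) : ∃ᶠ k in atTop, D k < δ := by
  refine fun hge => ht_div ((htD.div_const δ).of_norm_bounded_eventually_nat ?_)
  filter_upwards [hge] with k hk
  rw [Real.norm_of_nonneg (ht k), le_div_iff₀ hδ]
  exact mul_le_mul_of_nonneg_left (not_lt.1 hk) (ht k)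

lemma le_of_tendsto_of_le_add_of_frequently_lt {u : ℕ → ℝ} {c y : ℝ}
    (hu : Tendsto u atTop (𝓝 y)) (huD : ∀ k, c ≤ u k + D k)
    (hD : ∀ δ > 0, ∃ᶠ k in atTop, D k < δ) : c ≤ y := by
  refine le_of_forall_pos_le_add fun δ hδ => ?_
  have hy : y ∈ Set.Ici (c - δ) := isClosed_Ici.mem_of_frequently_of_tendsto
    ((hD δ hδ).mono fun k hk => by simp only [Set.mem_Ici]; linarith [huD k]) hu
  simp only [Set.mem_Ici] at hy
  linarith

end Deterministic

section Stochastic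

variable {Ω E : Type*} {m m0 : MeasurableSpace Ω} {P : Measure Ω}
  [NormedAddCommGroup E] [InnerProductSpace ℝ E]

lemma MeasureTheory.MemLp.integrable_inner {f g : Ω → E} (hf : MemLp f 2 P) (hg : MemLp g 2 P) :
    Integrable (fun ω => ⟪f ω, g ω⟫) P :=
  memLp_one_iff_integrable.1 ((innerSL ℝ).memLp_of_bilin 1 hf hg)

lemma memLp_two_sub_of_norm_succ_sub_le {X g : ℕ → Ω → E} (z : E) (t : ℕ → ℝ)
    (hX₀ : MemLp (fun ω => X 0 ω - z) 2 P) (hg : ∀ k, MemLp (g k) 2 P)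
    (hXm : ∀ k, AEStronglyMeasurable (X k) P)
    (hX : ∀ k ω, ‖X (k + 1) ω - z‖ ≤ ‖X k ω + t k • g k ω - z‖) (k : ℕ) :
    MemLp (fun ω => X k ω - z) 2 P := by
  induction k with
  | zero => exact hX₀
  | succ k ih =>
    refine (ih.add ((hg k).const_smul (t k))).of_le ((hXm _).sub aestronglyMeasurable_const)
      (ae_of_all _ fun ω => ?_)
    simpa only [Pi.add_apply, Pi.smul_apply, add_sub_right_comm] using hX k ω

lemma integral_le_of_condExp_le [IsProbabilityMeasure P] (hm : m ≤ m0) {f : Ω → ℝ} {c : ℝ}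
    (hf : ∀ᵐ ω ∂P, P[f|m] ω ≤ c) : ∫ ω, f ω ∂P ≤ c := by
  rw [← integral_condExp hm]
  simpa using integral_mono_ae integrable_condExp (integrable_const c) hf

lemma integral_inner_le_of_condExp_inner_le [CompleteSpace E] (hm : m ≤ m0)
    [SigmaFinite (P.trim hm)] {V g : Ω → E} {φ : Ω → ℝ} (hV : StronglyMeasurable[m] V)
    (hVg : Integrable (fun ω => ⟪V ω, g ω⟫) P) (hg : Integrable g P) (hφ : Integrable φ P)
    (hle : ∀ᵐ ω ∂P, ⟪V ω, P[g|m] ω⟫ ≤ φ ω) :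
    ∫ ω, ⟪V ω, g ω⟫ ∂P ≤ ∫ ω, φ ω ∂P := by
  have hpull : P[fun ω => ⟪V ω, g ω⟫|m] =ᵐ[P] fun ω => ⟪V ω, P[g|m] ω⟫ :=
    condExp_bilin_of_stronglyMeasurable_left (innerSL ℝ) hV hVg hg
  calc ∫ ω, ⟪V ω, g ω⟫ ∂P = ∫ ω, (P[fun ω => ⟪V ω, g ω⟫|m]) ω ∂P := (integral_condExp hm).symm
    _ ≤ ∫ ω, φ ω ∂P := integral_mono_ae integrable_condExp hφ (hpull.trans_le hle)

lemma integral_norm_sub_sq_le_of_supergradient_step [CompleteSpace E] [IsProbabilityMeasure P]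
    (hm : m ≤ m0) (h : E → ℝ) (z : E) {X Y g : Ω → E} {t G : ℝ} (ht : 0 ≤ t)
    (hX : StronglyMeasurable[m] X) (hXz : MemLp (fun ω => X ω - z) 2 P) (hg : MemLp g 2 P)
    (hhX : Integrable (fun ω => h (X ω)) P) (hY : ∀ ω, ‖Y ω - z‖ ≤ ‖X ω + t • g ω - z‖)
    (hgG : ∀ᵐ ω ∂P, P[fun ω => ‖g ω‖ ^ 2|m] ω ≤ G ^ 2)
    (hsup : ∀ᵐ ω ∂P, h z ≤ h (X ω) + ⟪P[g|m] ω, z - X ω⟫) :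
    ∫ ω, ‖Y ω - z‖ ^ 2 ∂P
      ≤ ∫ ω, ‖X ω - z‖ ^ 2 ∂P + G ^ 2 * t ^ 2 - 2 * t * (h z - ∫ ω, h (X ω) ∂P) := by
  have hXz_sq : Integrable (fun ω => ‖X ω - z‖ ^ 2) P := hXz.integrable_norm_pow two_ne_zero
  have hg_sq : Integrable (fun ω => ‖g ω‖ ^ 2) P := hg.integrable_norm_pow two_ne_zero
  have hinner : Integrable (fun ω => ⟪X ω - z, g ω⟫) P := hXz.integrable_inner hg
  have hpointwise : ∀ ω, ‖Y ω - z‖ ^ 2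
      ≤ ‖X ω - z‖ ^ 2 + 2 * t * ⟪X ω - z, g ω⟫ + t ^ 2 * ‖g ω‖ ^ 2 := fun ω => calc
    ‖Y ω - z‖ ^ 2 ≤ ‖(X ω - z) + t • g ω‖ ^ 2 := by
      rw [← add_sub_right_comm]; gcongr; exact hY ω
    _ = _ := by
      rw [norm_add_sq_real, real_inner_smul_right, norm_smul, mul_pow, Real.norm_eq_abs, sq_abs]
      ring
  have hcross : ∫ ω, ⟪X ω - z, g ω⟫ ∂P ≤ ∫ ω, h (X ω) ∂P - h z := calc
    ∫ ω, ⟪X ω - z, g ω⟫ ∂P ≤ ∫ ω, (h (X ω) - h z) ∂P := by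
      refine integral_inner_le_of_condExp_inner_le hm (hX.sub stronglyMeasurable_const) hinner
        (hg.integrable one_le_two) (hhX.sub (integrable_const _)) ?_
      filter_upwards [hsup] with ω hω
      rw [real_inner_comm, ← neg_sub, inner_neg_right]
      linarith
    _ = ∫ ω, h (X ω) ∂P - h z := by simp [integral_sub hhX (integrable_const _)]
  have hsecond : ∫ ω, ‖g ω‖ ^ 2 ∂P ≤ G ^ 2 := integral_le_of_condExp_le hm hgG
  calc ∫ ω, ‖Y ω - z‖ ^ 2 ∂P
      ≤ ∫ ω, (‖X ω - z‖ ^ 2 + 2 * t * ⟪X ω - z, g ω⟫ + t ^ 2 * ‖g ω‖ ^ 2) ∂P :=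
        integral_mono_of_nonneg (ae_of_all _ fun ω => by positivity)
          ((hXz_sq.add (hinner.const_mul _)).add (hg_sq.const_mul _)) (ae_of_all _ hpointwise)
    _ = ∫ ω, ‖X ω - z‖ ^ 2 ∂P + 2 * t * ∫ ω, ⟪X ω - z, g ω⟫ ∂P
          + t ^ 2 * ∫ ω, ‖g ω‖ ^ 2 ∂P := by
        rw [integral_add, integral_add, integral_const_mul, integral_const_mul]
        exacts [hXz_sq, hinner.const_mul _, hXz_sq.add (hinner.const_mul _), hg_sq.const_mul _]
    _ ≤ _ := by
        nlinarith [mul_le_mul_of_nonneg_left hcross (by positivity : (0 : ℝ) ≤ 2 * t),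
          mul_le_mul_of_nonneg_left hsecond (sq_nonneg t)]

end Stochastic

theorem stmt9_general {Ω : Type*} {m0 : MeasurableSpace Ω} (P : Measure Ω) [IsProbabilityMeasure P]
    (ℱ : Filtration ℕ m0) {n : ℕ}
    (h : EuclideanSpace ℝ (Fin n) → ℝ) (hconc : ConcaveOn ℝ Set.univ h)
    (μstar : EuclideanSpace ℝ (Fin n)) (hμstar : ∀ j, 0 ≤ μstar j)
    (hmax : ∀ ν, h ν ≤ h μstar)
    (G : ℝ)
    (ε : ℕ → ℝ) (hε : ∀ k, 0 ≤ ε k)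
    (hεsq : Summable fun k => (ε k) ^ 2)
    (hεdiv : Tendsto (fun K => ∑ k ∈ Finset.range K, ε k) atTop atTop)
    (μproc : ℕ → Ω → EuclideanSpace ℝ (Fin n))
    (hadapted : Adapted ℱ μproc)
    (hμint : ∀ k, Integrable (μproc k) P)
    (hμ1int : Integrable (fun a => ‖μproc 1 a - μstar‖ ^ 2) P)
    (hhint : ∀ k, Integrable (fun a => h (μproc k a)) P)
    (g : ℕ → Ω → EuclideanSpace ℝ (Fin n))
    (hgint : ∀ k, Integrable (g (k + 1)) P)
    (hgsqint : ∀ k, Integrable (fun a => ‖g (k + 1) a‖ ^ 2) P)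
    (hbound : ∀ k, ∀ᵐ a ∂P, (P[fun a' => ‖g (k + 1) a'‖ ^ 2 | ℱ k]) a ≤ G ^ 2)
    (hsupergrad : ∀ k, ∀ᵐ a ∂P, ∀ ν,
      h ν ≤ h (μproc k a) + ⟪(P[g (k + 1) | ℱ k]) a, ν - μproc k a⟫)
    (hupdate : ∀ k a, μproc (k + 1) a = projPos (μproc k a + ε k • g (k + 1) a))
    (μtilde : EuclideanSpace ℝ (Fin n))
    (hmean : Tendsto (fun k => ∫ a, μproc k a ∂P) atTop (nhds μtilde)) :
    h μtilde = h μstar := by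
  have hcont : Continuous h := continuousOn_univ.1 (hconc.continuousOn isOpen_univ)
  have hgL2 : ∀ k, MemLp (g (k + 1)) 2 P := fun k =>
    (memLp_two_iff_integrable_sq_norm (hgint k).aestronglyMeasurable).2 (hgsqint k)
  have hproj : ∀ k a, ‖μproc (k + 1) a - μstar‖ ≤ ‖μproc k a + ε k • g (k + 1) a - μstar‖ :=
    fun k a => hupdate k a ▸ norm_projPos_sub_le _ hμstar
  -- Sequences are indexed from `μ(1)`, the first iterate assumed square-integrable around `μ*`.
  have hL2 : ∀ k, MemLp (fun a => μproc (k + 1) a - μstar) 2 P :=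
    memLp_two_sub_of_norm_succ_sub_le (X := fun k => μproc (k + 1)) μstar (fun k => ε (k + 1))
      ((memLp_two_iff_integrable_sq_norm
        ((hμint 1).aestronglyMeasurable.sub aestronglyMeasurable_const)).2 hμ1int)
      (fun k => hgL2 (k + 1)) (fun k => (hμint _).aestronglyMeasurable) fun k => hproj (k + 1)
  set D : ℕ → ℝ := fun k => h μstar - ∫ a, h (μproc (k + 1) a) ∂P with hD_def
  have hD : ∀ k, 0 ≤ D k := fun k => sub_nonneg.2 <| by
    simpa using integral_mono (hhint (k + 1)) (integrable_const (h μstar)) fun a => hmax _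
  set A : ℕ → ℝ := fun k => ∫ a, ‖μproc (k + 1) a - μstar‖ ^ 2 ∂P
  have hdescent : ∀ k, A (k + 1) ≤ A k + G ^ 2 * ε (k + 1) ^ 2 - 2 * ε (k + 1) * D k := fun k =>
    integral_norm_sub_sq_le_of_supergradient_step (ℱ.le (k + 1)) h μstar (hε _)
      (hadapted (k + 1)).stronglyMeasurable (hL2 k) (hgL2 (k + 1)) (hhint _) (hproj (k + 1))
      (hbound (k + 1)) ((hsupergrad (k + 1)).mono fun a ha => ha μstar)
  have hεD : Summable fun k => ε (k + 1) * D k :=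
    summable_mul_of_le_sub_mul (A := A) (fun k => integral_nonneg fun a => by positivity) hD
      (fun k => hε _) (sq_nonneg G) ((summable_nat_add_iff 1).2 hεsq) hdescent
  have hε_div : ¬ Summable fun k => ε (k + 1) := by
    rwa [summable_nat_add_iff 1, not_summable_iff_tendsto_nat_atTop_of_nonneg hε]
  refine le_antisymm (hmax μtilde) (le_of_tendsto_of_le_add_of_frequently_lt
    ((hcont.tendsto μtilde).comp ((tendsto_add_atTop_iff_nat 1).2 hmean)) (fun k => ?_)
    fun δ hδ => frequently_lt_of_summable_mul (fun k => hε _) hε_div hεD hδ)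
  have hjensen := hconc.le_map_integral hcont.continuousOn isClosed_univ
    (ae_of_all _ fun _ => Set.mem_univ _) (hμint (k + 1)) (hhint (k + 1))
  simp only [Function.comp_apply, hD_def] at hjensen ⊢
  linarith

/-- **Optimality on average of the stochastic dual algorithm** (cf. Theorem 4 of the paper).
With square-summable but non-summable stepsizes, if the means `μ̃(k) = E[μ(k)]` of the
projected stochastic supergradient iterates converge to `μ̃(∞)`, then `h(μ̃(∞)) = h(μ*)`:
the limit of the expected dual iterates attains the maximum of the dual function. -/
theorem stmt9 {Ω : Type*} {m0 : MeasurableSpace Ω} (P : Measure Ω) [IsProbabilityMeasure P]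
    (ℱ : Filtration ℕ m0) {n : ℕ}
    (h : EuclideanSpace ℝ (Fin n) → ℝ) (hconc : ConcaveOn ℝ Set.univ h)
    (μstar : EuclideanSpace ℝ (Fin n)) (hμstar : ∀ j, 0 ≤ μstar j)
    (hmax : ∀ ν, h ν ≤ h μstar)
    (G : ℝ) (hG : 0 < G)
    (ε : ℕ → ℝ) (hε : ∀ k, 0 ≤ ε k)
    (hεsq : Summable fun k => (ε k) ^ 2)
    (hεdiv : Tendsto (fun K => ∑ k ∈ Finset.range K, ε k) atTop atTop)
    (μproc : ℕ → Ω → EuclideanSpace ℝ (Fin n))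
    (hadapted : Adapted ℱ μproc)
    (hpos : ∀ k a j, 0 ≤ μproc k a j)
    (hμint : ∀ k, Integrable (μproc k) P)
    (hμ1int : Integrable (fun a => ‖μproc 1 a - μstar‖ ^ 2) P)
    (hhint : ∀ k, Integrable (fun a => h (μproc k a)) P)
    (g : ℕ → Ω → EuclideanSpace ℝ (Fin n))
    (hgmeas : ∀ k, StronglyMeasurable[ℱ (k + 1)] (g (k + 1)))
    (hgint : ∀ k, Integrable (g (k + 1)) P)
    (hgsqint : ∀ k, Integrable (fun a => ‖g (k + 1) a‖ ^ 2) P)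
    (hbound : ∀ k, ∀ᵐ a ∂P, (P[fun a' => ‖g (k + 1) a'‖ ^ 2 | ℱ k]) a ≤ G ^ 2)
    (hsupergrad : ∀ k, ∀ᵐ a ∂P, ∀ ν,
      h ν ≤ h (μproc k a) + ⟪(P[g (k + 1) | ℱ k]) a, ν - μproc k a⟫)
    (hupdate : ∀ k a, μproc (k + 1) a = projPos (μproc k a + ε k • g (k + 1) a))
    (μtilde : EuclideanSpace ℝ (Fin n))
    (hmean : Tendsto (fun k => ∫ a, μproc k a ∂P) atTop (nhds μtilde)) :
    h μtilde = h μstar :=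
  stmt9_general P ℱ h hconc μstar hμstar hmax G ε hε hεsq hεdiv μproc hadapted hμint hμ1int hhint g
    hgint hgsqint hbound hsupergrad hupdate μtilde hmean
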